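/- Let a > 0, d ≥ 0, and let φ ∈ C([−1,0]) satisfy φ(t) > 0 for t ∈ [−1,0) and φ(0) = d. If x : [−1,∞) → ℝ is a solution of the relay equation ẋ(t) = R(x(t−1)) with initial function φ, then x(t) = x0(t − (a + 1 + d/a)) for all t ≥ d/a, where x0 is extended T0-periodically to all of ℝ. -/

import Mathlib

/-!
The slope of `x` at `t` is decided by the sign of `x (t - 1)` alone. As `φ > 0` on `[-1, 0)`,
`x` falls with slope `-a` from `d` until one time unit after its zero `d / a`, then rises with
slope `1` until one unit after its next zero, where it has reached `1` after a unit of positive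
values: this is the state of `x0` at time `1`, so from then on the fall and rise repeat with
period `T0` exactly as for `x0`. Each branch is obtained by the method of steps, and the finitely
many points of non-differentiability are absorbed by the fundamental theorem of calculus with a
countable exceptional set.
-/

/-- The relay nonlinearity: `R a x = 1` if `x ≤ 0`, and `R a x = -a` if `x > 0`. -/
noncomputable def R (a x : ℝ) : ℝ := if x ≤ 0 then 1 else -a

/-- `x : [-1,∞) → ℝ` is a solution of the relay equation `x'(t) = R a (x (t-1))`
with initial function `φ ∈ C([-1,0])`: `x` is continuous on `[-1,∞)`, coincides
with `φ` on `[-1,0]`, and for every `t > 0` outside an exceptional set having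
finitely many points in each bounded interval, `x` is differentiable at `t` with
`x'(t) = R a (x (t-1))`. -/
def IsSolution (a : ℝ) (φ x : ℝ → ℝ) : Prop :=
  ContinuousOn x (Set.Ici (-1 : ℝ)) ∧
  (∀ t ∈ Set.Icc (-1 : ℝ) 0, x t = φ t) ∧
  ∃ S : Set ℝ, (∀ A B : ℝ, (S ∩ Set.Icc A B).Finite) ∧
    ∀ t : ℝ, 0 < t → t ∉ S → HasDerivAt x (R a (x (t - 1))) t

open Set

theorem sub_eq_smul_of_hasDerivAt_off_countable {E : Type*} [NormedAddCommGroup E]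
    [NormedSpace ℝ E] [CompleteSpace E] {f : ℝ → E} {m : E} {A B : ℝ} {s : Set ℝ}
    (hAB : A ≤ B) (hs : s.Countable) (hc : ContinuousOn f (Icc A B))
    (hd : ∀ t ∈ Ioo A B \ s, HasDerivAt f m t) :
    f B - f A = (B - A) • m := by
  rw [← MeasureTheory.integral_eq_of_hasDerivAt_off_countable_of_le f (fun _ => m) hAB hs hc hd
    intervalIntegrable_const, intervalIntegral.integral_const]

theorem R_of_nonpos {a x : ℝ} (hx : x ≤ 0) : R a x = 1 := if_pos hx

theorem R_of_pos {a x : ℝ} (hx : 0 < x) : R a x = -a := if_neg hx.not_ge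

structure IsPeriodicProfile (a t0 T0 : ℝ) (x0 : ℝ → ℝ) : Prop where
  t0_eq : t0 = (a + 1) / a
  T0_eq : T0 = (a + 1) ^ 2 / a
  periodic : Function.Periodic x0 T0
  eq_of_mem_Icc_zero_one : ∀ t ∈ Icc (0 : ℝ) 1, x0 t = t
  eq_of_mem_Icc_one_t0 : ∀ t ∈ Icc (1 : ℝ) (t0 + 1), x0 t = -a * (t - t0)
  eq_of_mem_Icc_t0_T0 : ∀ t ∈ Icc (t0 + 1) T0, x0 t = t - T0

namespace IsPeriodicProfile

variable {a t0 T0 : ℝ} {x0 : ℝ → ℝ}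

theorem t0_eq_one_div_add_one (h : IsPeriodicProfile a t0 T0 x0) (ha : 0 < a) :
    t0 = 1 / a + 1 := by
  rw [h.t0_eq]
  field_simp
  ring

theorem mul_t0 (h : IsPeriodicProfile a t0 T0 x0) (ha : 0 < a) : a * t0 = a + 1 := by
  rw [h.t0_eq]
  field_simp

theorem one_le_t0 (h : IsPeriodicProfile a t0 T0 x0) (ha : 0 < a) : 1 ≤ t0 := by
  rw [h.t0_eq_one_div_add_one ha]
  linarith [one_div_pos.2 ha]

theorem T0_eq_add (h : IsPeriodicProfile a t0 T0 x0) (ha : 0 < a) : T0 = t0 + a + 1 := by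
  rw [h.T0_eq, h.t0_eq]
  field_simp
  ring

theorem eq_of_mem_Icc_t0_T0_add_one (h : IsPeriodicProfile a t0 T0 x0) :
    ∀ t ∈ Icc (t0 + 1) (T0 + 1), x0 t = t - T0 := by
  intro t ht
  rcases le_or_gt t T0 with htT | htT
  · exact h.eq_of_mem_Icc_t0_T0 t ⟨ht.1, htT⟩
  · rw [← h.periodic.sub_eq, h.eq_of_mem_Icc_zero_one _ ⟨by linarith, by linarith [ht.2]⟩]

end IsPeriodicProfile

namespace IsSolution

variable {a t0 T0 : ℝ} {φ x x0 : ℝ → ℝ}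

/-- Method of steps. The point `t = p + 1` is exempt because there the delayed value `x p` may
sit on the switching point `0` of `R`. -/
theorem eq_affine_of_R_eq (hx : IsSolution a φ x) {p L m : ℝ} (hp : 0 ≤ p)
    (hR : ∀ t ∈ Ioo p L, t ≠ p + 1 →
      (∀ s ∈ Icc p (t - 1), x s = x p + m * (s - p)) → R a (x (t - 1)) = m) :
    ∀ t ∈ Icc p L, x t = x p + m * (t - p) := by
  obtain ⟨hc, -, S, hS, hder⟩ := hx
  suffices h : ∀ k : ℕ, ∀ t ∈ Icc p L, t ≤ p + k → x t = x p + m * (t - p) from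
    fun t ht => h ⌈t - p⌉₊ t ht (by linarith [Nat.le_ceil (t - p)])
  intro k
  induction k with
  | zero =>
    intro t ht htp
    rw [le_antisymm (by simpa using htp) ht.1]
    ring
  | succ k ih =>
    intro t ht htk
    rcases le_or_gt t (p + k) with h | h
    · exact ih t ht h
    have hpk : p ≤ p + k := le_add_of_nonneg_right k.cast_nonneg
    have hslope : ∀ u ∈ Ioo (p + k) t \ insert (p + 1) (S ∩ Icc (p + k) t),
        HasDerivAt x m u := by
      rintro u ⟨hu, hu'⟩
      rw [mem_insert_iff, not_or] at hu'
      have hRu := hR u ⟨hpk.trans_lt hu.1, hu.2.trans_le ht.2⟩ hu'.1 fun s hs =>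
        ih s ⟨hs.1, by linarith [ht.2, hs.2, hu.2]⟩ (by push_cast at htk; linarith [hs.2, hu.2])
      rw [← hRu]
      exact hder u (by linarith [hu.1]) fun huS => hu'.2 ⟨huS, Ioo_subset_Icc_self hu⟩
    have hline := sub_eq_smul_of_hasDerivAt_off_countable h.le
      (((hS _ _).insert _).countable) (hc.mono fun u hu => by simp only [mem_Ici]; linarith [hu.1])
      hslope
    rw [ih (p + k) ⟨hpk, h.le.trans ht.2⟩ le_rfl, smul_eq_mul] at hline
    linarith

theorem falls_of_pos (hx : IsSolution a φ x) (ha : 0 < a) {p v : ℝ} (hp : 0 ≤ p)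
    (hpos : ∀ s ∈ Ioo (p - 1) p, 0 < x s) (hxp : x p = v) :
    ∀ t ∈ Icc p (p + v / a + 1), x t = v - a * (t - p) := by
  have hline := hx.eq_affine_of_R_eq (L := p + v / a + 1) (m := -a) hp fun t ht ht1 hprev => by
    refine R_of_pos ?_
    rcases lt_or_gt_of_ne (fun h => ht1 (by linarith) : t - 1 ≠ p) with h | h
    · exact hpos _ ⟨by linarith [ht.1], h⟩
    · have : a * (t - 1 - p) < v := (lt_div_iff₀' ha).1 (by linarith [ht.2])
      rw [hprev (t - 1) ⟨h.le, le_rfl⟩, hxp]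
      linarith
  intro t ht
  rw [hline t ht, hxp]
  ring

theorem rises_of_nonpos (hx : IsSolution a φ x) {p w : ℝ} (hp : 0 ≤ p)
    (hneg : ∀ s ∈ Icc (p - 1) p, x s ≤ 0) (hxp : x p = w) :
    ∀ t ∈ Icc p (p + 1 - w), x t = w + (t - p) := by
  have hline := hx.eq_affine_of_R_eq (L := p + 1 - w) (m := 1) hp fun t ht _ hprev => by
    refine R_of_nonpos ?_
    rcases le_or_gt (t - 1) p with h | h
    · exact hneg _ ⟨by linarith [ht.1], h⟩
    · rw [hprev (t - 1) ⟨h.le, le_rfl⟩, hxp]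
      linarith [ht.2]
  intro t ht
  rw [hline t ht, hxp]
  ring

theorem eq_profile_of_fall (hx : IsSolution a φ x) (ha : 0 < a)
    (h0 : IsPeriodicProfile a t0 T0 x0) {p q : ℝ} (hp : 0 ≤ p) (hpq : p ≤ q + t0)
    (hpos : ∀ s ∈ Ioo (p - 1) p, 0 < x s) (hxp : x p = -a * (p - q - t0)) :
    ∀ t, p ≤ t → q + 1 ≤ t → t ≤ q + T0 + 1 → x t = x0 (t - q) := by
  have hT0 := h0.T0_eq_add ha
  have hfall := hx.falls_of_pos ha hp hpos hxp
  rw [show p + -a * (p - q - t0) / a + 1 = q + t0 + 1 by field_simp; ring] at hfall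
  have hrise := hx.rises_of_nonpos (p := q + t0 + 1) (w := -a) (by linarith)
    (fun s hs => by
      rw [hfall s ⟨by linarith [hs.1], hs.2⟩]
      nlinarith [hs.1])
    (by rw [hfall _ ⟨by linarith, le_rfl⟩]; ring)
  intro t hpt hqt htT
  rcases le_or_gt t (q + t0 + 1) with h | h
  · rw [hfall t ⟨hpt, h⟩, h0.eq_of_mem_Icc_one_t0 _ ⟨by linarith, by linarith⟩]
    ring
  · rw [hrise t ⟨h.le, by linarith⟩, h0.eq_of_mem_Icc_t0_T0_add_one _ ⟨by linarith, by linarith⟩]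
    linarith

theorem eq_profile_of_rise (hx : IsSolution a φ x) (ha : 0 < a)
    (h0 : IsPeriodicProfile a t0 T0 x0) {q : ℝ} (hq : 0 ≤ q)
    (hrise : ∀ s ∈ Icc q (q + 1), x s = s - q) :
    ∀ t ∈ Icc q (q + T0 + 1), x t = x0 (t - q) := by
  intro t ht
  rcases le_or_gt t (q + 1) with h | h
  · rw [hrise t ⟨ht.1, h⟩, h0.eq_of_mem_Icc_zero_one _ ⟨by linarith [ht.1], by linarith⟩]
  · refine hx.eq_profile_of_fall ha h0 (p := q + 1) (by linarith) (by linarith [h0.one_le_t0 ha])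
      (fun s hs => ?_) ?_ t h.le h.le ht.2
    · rw [hrise s ⟨by linarith [hs.1], hs.2.le⟩]
      linarith [hs.1]
    · rw [hrise _ ⟨by linarith, le_rfl⟩]
      linear_combination -h0.mul_t0 ha

theorem eq_profile_of_le (hx : IsSolution a φ x) (ha : 0 < a)
    (h0 : IsPeriodicProfile a t0 T0 x0) {q : ℝ} (hq : 0 ≤ q)
    (hrise : ∀ s ∈ Icc q (q + 1), x s = s - q) :
    ∀ t, q ≤ t → x t = x0 (t - q) := by
  have hT0 : 0 < T0 := by linarith [h0.T0_eq_add ha, h0.one_le_t0 ha]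
  have hrises : ∀ n : ℕ, ∀ s ∈ Icc (q + n * T0) (q + n * T0 + 1), x s = s - (q + n * T0) := by
    intro n
    induction n with
    | zero => simpa using hrise
    | succ n ih =>
      intro s hs
      push_cast at hs ⊢
      rw [hx.eq_profile_of_rise ha h0 (by positivity) ih s ⟨by linarith [hs.1], by linarith [hs.2]⟩,
        h0.eq_of_mem_Icc_t0_T0_add_one _ ⟨by linarith [hs.1, h0.T0_eq_add ha], by linarith [hs.2]⟩]
      ring
  intro t ht
  set n := ⌊(t - q) / T0⌋₊
  have hn : n * T0 ≤ t - q :=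
    (le_div_iff₀ hT0).1 (Nat.floor_le (div_nonneg (sub_nonneg.2 ht) hT0.le))
  have hn' : t - q < (n + 1) * T0 := (div_lt_iff₀ hT0).1 (Nat.lt_floor_add_one _)
  rw [hx.eq_profile_of_rise ha h0 (by positivity) (hrises n) t ⟨by linarith, by linarith⟩,
    show t - (q + n * T0) = t - q - n * T0 by ring, h0.periodic.sub_nat_mul_eq]

end IsSolution

theorem stmt_3_general (a : ℝ) (ha : 0 < a) (d : ℝ) (hd : 0 ≤ d) (t0 T0 : ℝ)
    (ht0 : t0 = (a + 1) / a) (hT0 : T0 = (a + 1) ^ 2 / a)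
    (φ : ℝ → ℝ)
    (hφpos : ∀ t ∈ Set.Ico (-1 : ℝ) 0, 0 < φ t) (hφ0 : φ 0 = d)
    (x : ℝ → ℝ) (hx : IsSolution a φ x)
    (x0 : ℝ → ℝ)
    (hx0per : ∀ t : ℝ, x0 (t + T0) = x0 t)
    (hx0a : ∀ t ∈ Set.Icc (0 : ℝ) 1, x0 t = t)
    (hx0b : ∀ t ∈ Set.Icc (1 : ℝ) (t0 + 1), x0 t = -a * (t - t0))
    (hx0c : ∀ t ∈ Set.Icc (t0 + 1) T0, x0 t = t - T0) :
    ∀ t : ℝ, d / a ≤ t → x t = x0 (t - (a + 1 + d / a)) := by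
  have h0 : IsPeriodicProfile a t0 T0 x0 := ⟨ht0, hT0, hx0per, hx0a, hx0b, hx0c⟩
  have hT0' := h0.T0_eq_add ha
  have hδ : 0 ≤ d / a := div_nonneg hd ha.le
  -- the initial fall from `x 0 = d` is the falling branch of `x0 (· - q)` with `q = d / a - t0`
  have hprofile := hx.eq_profile_of_fall ha h0 (q := d / a - t0) le_rfl (by linarith)
    (fun s hs => by
      rw [hx.2.1 s ⟨by linarith [hs.1], hs.2.le⟩]
      exact hφpos s ⟨by linarith [hs.1], hs.2⟩)
    (by rw [hx.2.1 0 ⟨by norm_num, le_rfl⟩, hφ0]; field_simp; ring)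
  intro t ht
  rcases le_total t (a + 1 + d / a) with h | h
  · rw [show t - (a + 1 + d / a) = t - (d / a - t0) - T0 by linarith, h0.periodic.sub_eq,
      hprofile t (by linarith) (by linarith [h0.one_le_t0 ha]) (by linarith)]
  · refine hx.eq_profile_of_le ha h0 (by positivity) (fun s hs => ?_) t h
    rw [hprofile s (by linarith [hs.1]) (by linarith [hs.1, h0.one_le_t0 ha]) (by linarith [hs.2]),
      h0.eq_of_mem_Icc_t0_T0_add_one _ ⟨by linarith [hs.1], by linarith [hs.2]⟩]
    linarith

/-- a solution with a positive initial function taking the value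
`d` (`d ≥ 0`) at `0` coincides with `x0 (t - (a + 1 + d/a))` for all `t ≥ d/a`. -/
theorem stmt_3 (a : ℝ) (ha : 0 < a) (d : ℝ) (hd : 0 ≤ d) (t0 T0 : ℝ)
    (ht0 : t0 = (a + 1) / a) (hT0 : T0 = (a + 1) ^ 2 / a)
    (φ : ℝ → ℝ) (hφc : ContinuousOn φ (Set.Icc (-1 : ℝ) 0))
    (hφpos : ∀ t ∈ Set.Ico (-1 : ℝ) 0, 0 < φ t) (hφ0 : φ 0 = d)
    (x : ℝ → ℝ) (hx : IsSolution a φ x)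
    (x0 : ℝ → ℝ)
    (hx0per : ∀ t : ℝ, x0 (t + T0) = x0 t)
    (hx0a : ∀ t ∈ Set.Icc (0 : ℝ) 1, x0 t = t)
    (hx0b : ∀ t ∈ Set.Icc (1 : ℝ) (t0 + 1), x0 t = -a * (t - t0))
    (hx0c : ∀ t ∈ Set.Icc (t0 + 1) T0, x0 t = t - T0) :
    ∀ t : ℝ, d / a ≤ t → x t = x0 (t - (a + 1 + d / a)) :=
  stmt_3_general a ha d hd t0 T0 ht0 hT0 φ hφpos hφ0 x hx x0 hx0per hx0a hx0b hx0c
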